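/- As an R-module, A⊗A decomposes as a direct sum (A⊗1) ⊕ Δ(A), where A⊗1 = {a⊗1 : a ∈ A} and Δ(A) is the image of the comultiplication Δ. -/

import Mathlib

open TensorProduct

noncomputable section

abbrev R : Type := Polynomial ℤ
abbrev A : Type := R × R

/-- The `R`-linear map out of `A = R·1 ⊕ R·X` sending `1 ↦ p` and `X ↦ q`. -/
def lmap {P : Type*} [AddCommGroup P] [Module R P] (p q : P) : A →ₗ[R] P :=
  (LinearMap.toSpanSingleton R P p).coprod (LinearMap.toSpanSingleton R P q)

/-- The basis element `1` of `A`. -/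
def one' : A := (1, 0)

/-- The basis element `X` of `A`. -/
def Xa : A := (0, 1)

/-- Multiplication `m : A ⊗ A → A`, with `1·1 = 1`, `1·X = X·1 = X`, `X² = 0`. -/
def mul : A ⊗[R] A →ₗ[R] A :=
  TensorProduct.lift (lmap LinearMap.id (lmap Xa 0))

/-- Comultiplication `Δ(1) = 1⊗X + X⊗1 + c X⊗X`, `Δ(X) = X⊗X`. -/
def Δ : A →ₗ[R] A ⊗[R] A :=
  lmap (one' ⊗ₜ[R] Xa + Xa ⊗ₜ[R] one' + (Polynomial.X : R) • (Xa ⊗ₜ[R] Xa)) (Xa ⊗ₜ[R] Xa)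

/-- Counit `ε(1) = -c`, `ε(X) = 1`. -/
def ε : A →ₗ[R] R := lmap (-Polynomial.X) 1

/-! `A ⊗ A` is free on `1 ⊗ 1, X ⊗ 1, 1 ⊗ X, X ⊗ X`. The first two span `A ⊗ 1`, while
`X ⊗ X = Δ X` and `1 ⊗ X = Δ 1 - X ⊗ 1 - c • Δ X`. So `(a, b) ↦ a ⊗ 1 + Δ b` is unitriangular in
these bases and has an explicit inverse `splitting`, making it an isomorphism `A × A ≃ A ⊗ A`. -/

theorem LinearMap.isCompl_range_of_bijective_coprod {S M M' N : Type*} [Semiring S]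
    [AddCommMonoid M] [AddCommMonoid M'] [AddCommMonoid N] [Module S M] [Module S M']
    [Module S N] {f : M →ₗ[S] N} {g : M' →ₗ[S] N} (h : Function.Bijective (f.coprod g)) :
    IsCompl (range f) (range g) := by
  have := (Submodule.orderIsoMapComap (LinearEquiv.ofBijective _ h)).isCompl isCompl_range_inl_inr
  have he : (LinearEquiv.ofBijective _ h : M × M' →ₗ[S] N) = f.coprod g := rfl
  rwa [Submodule.orderIsoMapComap_apply, Submodule.orderIsoMapComap_apply, ← range_comp,
    ← range_comp, he, coprod_inl, coprod_inr] at this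

@[simp]
lemma lmap_one' {P : Type*} [AddCommGroup P] [Module R P] (p q : P) : lmap p q one' = p := by
  simp [lmap, one']

@[simp]
lemma lmap_Xa {P : Type*} [AddCommGroup P] [Module R P] (p q : P) : lmap p q Xa = q := by
  simp [lmap, Xa]

lemma A.hom_ext {P : Type*} [AddCommMonoid P] [Module R P] {f g : A →ₗ[R] P}
    (h1 : f one' = g one') (hX : f Xa = g Xa) : f = g :=
  LinearMap.prod_ext (LinearMap.ext_ring h1) (LinearMap.ext_ring hX)

def splitting : A ⊗[R] A →ₗ[R] A × A :=
  TensorProduct.lift (lmap (lmap (one', 0) (-Xa, one' - (Polynomial.X : R) • Xa))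
    (lmap (Xa, 0) (0, Xa)))

lemma splitting_comp_coprod :
    splitting ∘ₗ ((TensorProduct.mk R A A).flip one').coprod Δ = LinearMap.id := by
  apply LinearMap.prod_ext <;> apply A.hom_ext <;> simp [splitting, Δ]

lemma coprod_comp_splitting :
    ((TensorProduct.mk R A A).flip one').coprod Δ ∘ₗ splitting = LinearMap.id := by
  apply TensorProduct.ext
  apply A.hom_ext <;> apply A.hom_ext <;> simp [splitting, Δ]

/-- `A⊗A = (A⊗1) ⊕ Δ(A)` as `R`-modules. -/
theorem stmt5 :
    IsCompl (LinearMap.range ((TensorProduct.mk R A A).flip one'))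
      (LinearMap.range Δ) :=
  LinearMap.isCompl_range_of_bijective_coprod
    (Function.bijective_iff_has_inverse.mpr ⟨splitting,
      LinearMap.congr_fun splitting_comp_coprod, LinearMap.congr_fun coprod_comp_splitting⟩)
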